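/- For every H ∈ (0,1/2) and all 0 < s < t, the Volterra kernel satisfies the lower bound K_H(t,s) ≥ c_H (t−s)^{H−1/2}. -/

import Mathlib

/-! Since `H - 1/2 < 0` and `r - s ≤ t - s` on `[s, t]`, the integrand `r^{H-3/2} (r-s)^{H-1/2}`
dominates `r^{H-3/2} (t-s)^{H-1/2}`, whose integral is explicit. With this lower bound the two
terms of `K_H(t,s)` add up exactly to `c_H (t-s)^{H-1/2}`: the factor `(t/s)^{H-1/2}` cancels. -/

open Real MeasureTheory

noncomputable section

/-- The Beta function `B(a,b) = ∫_0^1 r^{a−1}(1−r)^{b−1} dr`. -/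
def betaFn (a b : ℝ) : ℝ :=
  ∫ r in (0:ℝ)..1, r ^ (a - 1) * (1 - r) ^ (b - 1)

/-- The normalizing constant `c_H = (2H/((1−2H)·B(1−2H, H+1/2)))^{1/2}`. -/
def cH (H : ℝ) : ℝ :=
  Real.sqrt (2 * H / ((1 - 2 * H) * betaFn (1 - 2 * H) (H + 1/2)))

/-- The Volterra kernel
`K_H(t,s) = c_H ((t/s)^{H−1/2}(t−s)^{H−1/2} + (1/2−H) s^{1/2−H} ∫_s^t r^{H−3/2}(r−s)^{H−1/2} dr)`. -/
def KH (H t s : ℝ) : ℝ :=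
  cH H * ((t / s) ^ (H - 1/2) * (t - s) ^ (H - 1/2) +
    (1/2 - H) * s ^ (1/2 - H) * ∫ r in s..t, r ^ (H - 3/2) * (r - s) ^ (H - 1/2))

/-- The kernel `K̃_H(t,s) = t^{H−1/2} (t−s)^{−1/2−H} s^{1/2−H}`. -/
def KtH (H t s : ℝ) : ℝ :=
  t ^ (H - 1/2) * (t - s) ^ (-(1/2) - H) * s ^ (1/2 - H)

section

variable {s t : ℝ}

theorem intervalIntegrable_rpow_mul_sub_rpow (hs : 0 < s) (ht : 0 < t) (α : ℝ) {β : ℝ}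
    (hβ : -1 < β) : IntervalIntegrable (fun r => r ^ α * (r - s) ^ β) volume s t := by
  have hshift : IntervalIntegrable (fun r => (r - s) ^ β) volume s t := by
    simpa using
      (intervalIntegral.intervalIntegrable_rpow' (a := 0) (b := t - s) hβ).comp_sub_right s
  exact hshift.continuousOn_mul <| continuousOn_id.rpow_const fun r hr =>
    Or.inl <| ne_of_mem_of_not_mem hr (Set.notMem_uIcc_of_lt hs ht)

theorem integral_rpow_mul_const_le_integral_rpow_mul_sub_rpow (hs : 0 < s) (hst : s ≤ t)
    (α : ℝ) {β : ℝ} (hβ : -1 < β) (hβ₀ : β ≤ 0) :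
    ∫ r in s..t, r ^ α * (t - s) ^ β ≤ ∫ r in s..t, r ^ α * (r - s) ^ β := by
  have ht : 0 < t := hs.trans_le hst
  refine intervalIntegral.integral_mono_on_of_le_Ioo hst
    ((intervalIntegral.intervalIntegrable_rpow (Or.inr (Set.notMem_uIcc_of_lt hs ht))).mul_const _)
    (intervalIntegrable_rpow_mul_sub_rpow hs ht α hβ) fun r hr => ?_
  exact mul_le_mul_of_nonneg_left
    (rpow_le_rpow_of_nonpos (sub_pos.2 hr.1) (sub_le_sub_right hr.2.le s) hβ₀)
    (rpow_nonneg (hs.trans hr.1).le α)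

theorem integral_rpow_sub_one (hs : 0 < s) (ht : 0 < t) {α : ℝ} (hα : α ≠ 0) :
    ∫ r in s..t, r ^ (α - 1) = (t ^ α - s ^ α) / α := by
  rw [integral_rpow (Or.inr ⟨by contrapose! hα; linarith, Set.notMem_uIcc_of_lt hs ht⟩),
    sub_add_cancel]

theorem div_rpow_mul_add_neg_mul_rpow_mul (hs : 0 < s) (ht : 0 < t) {α : ℝ} (hα : α ≠ 0)
    (c : ℝ) :
    (t / s) ^ α * c + -α * s ^ (-α) * ((t ^ α - s ^ α) / α * c) = c := by
  have hsα : s ^ α ≠ 0 := (rpow_pos_of_pos hs α).ne'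
  rw [div_rpow ht.le hs.le, rpow_neg hs.le]
  field_simp
  ring

theorem sub_rpow_le_div_rpow_mul_add_integral (hs : 0 < s) (hst : s < t) {α : ℝ}
    (hα₁ : -1 < α) (hα₀ : α < 0) :
    (t - s) ^ α ≤
      (t / s) ^ α * (t - s) ^ α + -α * s ^ (-α) * ∫ r in s..t, r ^ (α - 1) * (r - s) ^ α := by
  have ht : 0 < t := hs.trans hst
  have hlower : (t ^ α - s ^ α) / α * (t - s) ^ α ≤ ∫ r in s..t, r ^ (α - 1) * (r - s) ^ α := by
    rw [← integral_rpow_sub_one hs ht hα₀.ne, ← intervalIntegral.integral_mul_const]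
    exact integral_rpow_mul_const_le_integral_rpow_mul_sub_rpow hs hst.le _ hα₁ hα₀.le
  calc (t - s) ^ α
      = (t / s) ^ α * (t - s) ^ α + -α * s ^ (-α) * ((t ^ α - s ^ α) / α * (t - s) ^ α) :=
        (div_rpow_mul_add_neg_mul_rpow_mul hs ht hα₀.ne _).symm
    _ ≤ _ := by
      gcongr
      exact mul_nonneg (neg_nonneg.2 hα₀.le) (rpow_nonneg hs.le _)

end

/-- Lower bound for the Volterra kernel: for `H ∈ (0,1/2)` and `0 < s < t`,
`K_H(t,s) ≥ c_H (t−s)^{H−1/2}`. -/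
theorem KH_lower_bound
    (H : ℝ) (hH0 : 0 < H) (hH1 : H < 1/2) (s t : ℝ) (hs : 0 < s) (hst : s < t) :
    cH H * (t - s) ^ (H - 1/2) ≤ KH H t s := by
  have h := sub_rpow_le_div_rpow_mul_add_integral hs hst (α := H - 1/2) (by linarith) (by linarith)
  rw [show H - 1/2 - 1 = H - 3/2 by ring, neg_sub] at h
  exact mul_le_mul_of_nonneg_left h (sqrt_nonneg _)

end
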